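/- arXiv:2305.18505 — 5 statements merged into one kernel-verified Lean document; each statement's English description precedes it below -/
import Mathlib

section
/- Let λ ≥ R² and d ≥ 1. Consider vectors x¹,…,x^N ∈ ℝ^d with ‖xⁿ‖ ≤ R for all n. Define Σₙ = λI + Σ_{i<n} xⁱ(xⁱ)ᵀ. Then Σ_{n=1}^N ‖xⁿ‖²_{Σₙ⁻¹} ≤ 2d·log(1 + N/d), where ‖x‖²_A = xᵀAx. -/
/-!
By the matrix determinant lemma `det (Σ + x xᵀ) = det Σ · (1 + ‖x‖²_{Σ⁻¹})`, the product of the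
factors `1 + ‖xⁿ‖²_{Σₙ⁻¹}` telescopes to `det Σ / λ^d`, where `Σ` is the matrix containing all
`N` vectors. Since `Σₙ ≥ λ I` and `‖xⁿ‖² ≤ R² ≤ λ`, each `‖xⁿ‖²_{Σₙ⁻¹}` lies in `[0, 1]`, where
`t ≤ 2 log (1 + t)`. Finally AM–GM on the eigenvalues gives
`det Σ ≤ (tr Σ / d)^d ≤ (λ (1 + N / d))^d`.
-/

open Matrix Real Finset

namespace Matrix

theorem dotProduct_self_nonneg {n R : Type*} [Fintype n] [CommRing R] [LinearOrder R]
    [IsStrictOrderedRing R] (v : n → R) : 0 ≤ v ⬝ᵥ v :=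
  sum_nonneg fun i _ => mul_self_nonneg (v i)

variable {n : Type*} [Fintype n] [DecidableEq n]

theorem det_add_vecMulVec {R : Type*} [CommRing R] {A : Matrix n n R} (hA : IsUnit A.det)
    (u v : n → R) : (A + vecMulVec u v).det = A.det * (1 + v ⬝ᵥ A⁻¹ *ᵥ u) := by
  rw [vecMulVec_eq Unit, det_add_replicateCol_mul_replicateRow hA, det_unique (1 + _)]
  congr 2
  rw [dotProduct_mulVec]
  simp [Matrix.mul_apply, vecMul, dotProduct]

theorem PosSemidef.det_le_pow_of_trace_le {A : Matrix n n ℝ} (hA : A.PosSemidef) {c : ℝ}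
    (hc : 0 < c) (htr : A.trace ≤ Fintype.card n * c) : A.det ≤ c ^ Fintype.card n := by
  set μ := hA.isHermitian.eigenvalues
  have hdet : A.det = ∏ i, μ i := by simpa using hA.isHermitian.det_eq_prod_eigenvalues
  have htrace : A.trace = ∑ i, μ i := by simpa using hA.isHermitian.trace_eq_sum_eigenvalues
  -- AM–GM in the form `t ≤ exp (t - 1)`
  have hprod : ∏ i, μ i / c ≤ 1 := calc
    ∏ i, μ i / c ≤ ∏ i, exp (μ i / c - 1) :=
      prod_le_prod (fun i _ => div_nonneg (hA.eigenvalues_nonneg i) hc.le)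
        fun i _ => by linarith [add_one_le_exp (μ i / c - 1)]
    _ = exp (A.trace / c - Fintype.card n) := by
      rw [← exp_sum, sum_sub_distrib, ← sum_div, htrace, sum_const, card_univ, nsmul_one]
    _ ≤ 1 := exp_le_one_iff.mpr (by rw [sub_nonpos, div_le_iff₀ hc]; exact htr)
  rwa [prod_div_distrib, prod_const, card_univ, ← hdet, div_le_one (by positivity)] at hprod

theorem PosSemidef.mul_dotProduct_inv_smul_one_add_mulVec_le {B : Matrix n n ℝ}
    (hB : B.PosSemidef) {lam : ℝ} (hl : 0 < lam) (v : n → ℝ) :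
    lam * (v ⬝ᵥ (lam • 1 + B)⁻¹ *ᵥ v) ≤ v ⬝ᵥ v := by
  set A := lam • (1 : Matrix n n ℝ) + B
  have hA : A.PosDef := (PosDef.one.smul hl).add_posSemidef hB
  set y := A⁻¹ *ᵥ v
  have hAy : A *ᵥ y = v := by
    rw [mulVec_mulVec, mul_nonsing_inv _ ((isUnit_iff_isUnit_det A).mp hA.isUnit), one_mulVec]
  have hyAy : lam * (y ⬝ᵥ y) ≤ v ⬝ᵥ y := by
    have hyBy : 0 ≤ y ⬝ᵥ B *ᵥ y := by simpa using hB.dotProduct_mulVec_nonneg y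
    rw [dotProduct_comm v y, ← hAy, add_mulVec, smul_mulVec, one_mulVec, dotProduct_add,
      dotProduct_smul, smul_eq_mul]
    linarith
  -- `0 ≤ ‖v - lam y‖² = ‖v‖² - 2 lam (v ⬝ y) + lam² ‖y‖² ≤ ‖v‖² - lam (v ⬝ y)`
  have hsq := dotProduct_self_nonneg (v - lam • y)
  simp only [sub_dotProduct, dotProduct_sub, dotProduct_smul, smul_dotProduct, smul_eq_mul,
    dotProduct_comm y v] at hsq
  nlinarith

end Matrix

theorem Real.le_two_mul_log_one_add {t : ℝ} (h0 : 0 ≤ t) (h1 : t ≤ 1) :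
    t ≤ 2 * log (1 + t) := by
  have hlog := one_sub_inv_le_log_of_pos (show 0 < 1 + t by linarith)
  have : t / 2 ≤ 1 - (1 + t)⁻¹ := by
    rw [div_le_iff₀ two_pos]
    field_simp
    nlinarith
  linarith

section DesignMatrix

variable {n : Type*} (lam : ℝ) (x : ℕ → n → ℝ)

theorem posSemidef_sum_vecMulVec [Fintype n] (k : ℕ) :
    (∑ i ∈ range k, vecMulVec (x i) (x i)).PosSemidef :=
  posSemidef_sum _ fun i _ => by simpa using posSemidef_vecMulVec_self_star (x i)

variable [DecidableEq n]

def designMatrix (k : ℕ) : Matrix n n ℝ :=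
  lam • 1 + ∑ i ∈ range k, vecMulVec (x i) (x i)

theorem designMatrix_succ (k : ℕ) :
    designMatrix lam x (k + 1) = designMatrix lam x k + vecMulVec (x k) (x k) := by
  rw [designMatrix, designMatrix, sum_range_succ, add_assoc]

variable [Fintype n] {lam}

theorem posDef_designMatrix (hl : 0 < lam) (k : ℕ) : (designMatrix lam x k).PosDef :=
  (PosDef.one.smul hl).add_posSemidef (posSemidef_sum_vecMulVec x k)

theorem det_designMatrix (hl : 0 < lam) (k : ℕ) :
    (designMatrix lam x k).det = lam ^ Fintype.card n *
      ∏ i ∈ range k, (1 + x i ⬝ᵥ (designMatrix lam x i)⁻¹ *ᵥ x i) := by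
  induction k with
  | zero => simp [designMatrix]
  | succ k ih =>
    rw [designMatrix_succ, det_add_vecMulVec, ih, prod_range_succ, mul_assoc]
    exact (isUnit_iff_isUnit_det _).mp (posDef_designMatrix x hl k).isUnit

theorem trace_designMatrix (k : ℕ) :
    (designMatrix lam x k).trace = lam * Fintype.card n + ∑ i ∈ range k, x i ⬝ᵥ x i := by
  simp [designMatrix, trace_sum, trace_vecMulVec]

theorem dotProduct_inv_designMatrix_mulVec_nonneg (hl : 0 < lam) (k : ℕ) :
    0 ≤ x k ⬝ᵥ (designMatrix lam x k)⁻¹ *ᵥ x k := by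
  simpa using (posDef_designMatrix x hl k).inv.posSemidef.dotProduct_mulVec_nonneg (x k)

theorem dotProduct_inv_designMatrix_mulVec_le_one (hl : 0 < lam) {k : ℕ}
    (hx : x k ⬝ᵥ x k ≤ lam) : x k ⬝ᵥ (designMatrix lam x k)⁻¹ *ᵥ x k ≤ 1 := by
  have := (posSemidef_sum_vecMulVec x k).mul_dotProduct_inv_smul_one_add_mulVec_le hl (x k)
  rw [← designMatrix] at this
  rw [← mul_le_mul_iff_of_pos_left hl, mul_one]
  exact this.trans hx

variable [Nonempty n] {N : ℕ} (hl : 0 < lam) (hx : ∀ i < N, x i ⬝ᵥ x i ≤ lam)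
include hl hx

theorem prod_one_add_dotProduct_inv_designMatrix_mulVec_le :
    ∏ i ∈ range N, (1 + x i ⬝ᵥ (designMatrix lam x i)⁻¹ *ᵥ x i) ≤
      (1 + N / Fintype.card n) ^ Fintype.card n := by
  have hd : (0 : ℝ) < Fintype.card n := by exact_mod_cast Fintype.card_pos
  have htr : (designMatrix lam x N).trace ≤ Fintype.card n * (lam * (1 + N / Fintype.card n)) :=
    calc (designMatrix lam x N).trace = lam * Fintype.card n + ∑ i ∈ range N, x i ⬝ᵥ x i :=
          trace_designMatrix x N
      _ ≤ lam * Fintype.card n + ∑ i ∈ range N, lam := by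
          gcongr with i hi
          exact hx i (mem_range.mp hi)
      _ = Fintype.card n * (lam * (1 + N / Fintype.card n)) := by
          rw [sum_const, card_range, nsmul_eq_mul]
          field_simp
  have hdet := (posDef_designMatrix x hl N).posSemidef.det_le_pow_of_trace_le (by positivity) htr
  rw [det_designMatrix x hl, mul_pow] at hdet
  exact le_of_mul_le_mul_left hdet (by positivity)

theorem sum_dotProduct_inv_designMatrix_mulVec_le :
    ∑ i ∈ range N, x i ⬝ᵥ (designMatrix lam x i)⁻¹ *ᵥ x i ≤
      2 * Fintype.card n * log (1 + N / Fintype.card n) := by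
  have hq := dotProduct_inv_designMatrix_mulVec_nonneg x hl
  calc ∑ i ∈ range N, x i ⬝ᵥ (designMatrix lam x i)⁻¹ *ᵥ x i
      ≤ ∑ i ∈ range N, 2 * log (1 + x i ⬝ᵥ (designMatrix lam x i)⁻¹ *ᵥ x i) :=
        sum_le_sum fun i hi => le_two_mul_log_one_add (hq i)
          (dotProduct_inv_designMatrix_mulVec_le_one x hl (hx i (mem_range.mp hi)))
    _ = 2 * log (∏ i ∈ range N, (1 + x i ⬝ᵥ (designMatrix lam x i)⁻¹ *ᵥ x i)) := by
        rw [log_prod fun i _ => by linarith [hq i], mul_sum]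
    _ ≤ 2 * log ((1 + N / Fintype.card n) ^ Fintype.card n) := by
        gcongr
        · exact prod_pos fun i _ => by linarith [hq i]
        · exact prod_one_add_dotProduct_inv_designMatrix_mulVec_le x hl hx
    _ = 2 * Fintype.card n * log (1 + N / Fintype.card n) := by
        rw [log_pow]; ring

end DesignMatrix

/-- Elliptical potential lemma. -/
theorem elliptical_potential
    (d N : ℕ) (hd : 1 ≤ d) (R lam : ℝ) (hlam : R ^ 2 ≤ lam)
    (x : Fin N → Fin d → ℝ)
    (hx : ∀ n, Real.sqrt (x n ⬝ᵥ x n) ≤ R)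
    (Sig : Fin N → Matrix (Fin d) (Fin d) ℝ)
    (hSig : ∀ n : Fin N,
      Sig n = lam • (1 : Matrix (Fin d) (Fin d) ℝ) +
        ∑ i ∈ Finset.univ.filter (· < n), vecMulVec (x i) (x i)) :
    ∑ n : Fin N, x n ⬝ᵥ (Sig n)⁻¹ *ᵥ x n ≤
      2 * d * Real.log (1 + (N : ℝ) / d) := by
  have hxx (n : Fin N) : x n ⬝ᵥ x n ≤ lam := by
    rw [← sq_sqrt (dotProduct_self_nonneg (x n))]
    exact (pow_le_pow_left₀ (sqrt_nonneg _) (hx n) 2).trans hlam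
  rcases ((sq_nonneg R).trans hlam).eq_or_lt with rfl | hl
  · have hx0 (n : Fin N) : x n = 0 :=
      dotProduct_self_eq_zero.mp ((hxx n).antisymm (dotProduct_self_nonneg _))
    simp only [hx0, zero_dotProduct, sum_const_zero]
    exact mul_nonneg (by positivity) (log_nonneg (by simp; positivity))
  have : Nonempty (Fin d) := ⟨⟨0, hd⟩⟩
  obtain ⟨y, hy⟩ : ∃ y : ℕ → Fin d → ℝ, ∀ n : Fin N, y n = x n :=
    ⟨fun i => if h : i < N then x ⟨i, h⟩ else 0, fun n => by simp⟩
  have hSig_eq (n : Fin N) : Sig n = designMatrix lam y n := by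
    rw [hSig, designMatrix, filter_gt_eq_Iio, ← Nat.Iio_eq_range, ← Fin.map_valEmbedding_Iio,
      sum_map]
    simp [hy]
  calc ∑ n : Fin N, x n ⬝ᵥ (Sig n)⁻¹ *ᵥ x n
      = ∑ i ∈ range N, y i ⬝ᵥ (designMatrix lam y i)⁻¹ *ᵥ y i := by
        rw [← Fin.sum_univ_eq_sum_range]
        simp [hSig_eq, hy]
    _ ≤ 2 * d * log (1 + N / d) := by
        simpa using sum_dotProduct_inv_designMatrix_mulVec_le y hl
          fun i hi => by simpa [hy ⟨i, hi⟩] using hxx ⟨i, hi⟩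
end

section
/- For positive definite Λ = λI + Σ_{i=1}^K φᵢφᵢᵀ with φᵢ ∈ ℝ^d and λ > 0, we have Σ_{i=1}^K φᵢᵀ Λ⁻¹ φᵢ ≤ d. -/
/-! Writing S = ∑ φᵢφᵢᵀ = Λ - λI, the sum equals tr(Λ⁻¹S) = d - λ tr(Λ⁻¹), and tr(Λ⁻¹) ≥ 0
because Λ⁻¹ is positive definite. -/

open Matrix BigOperators

open scoped ComplexOrder

namespace Matrix

variable {n : Type*} [Fintype n]

theorem posDef_smul_one_add_sum_vecMulVec [DecidableEq n] {𝕜 ι : Type*} [RCLike 𝕜]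
    (s : Finset ι) {c : 𝕜} (hc : 0 < c) (v : ι → n → 𝕜) :
    (c • 1 + ∑ i ∈ s, vecMulVec (v i) (star (v i))).PosDef :=
  (PosDef.one.smul hc).add_posSemidef
    (posSemidef_sum s fun i _ => posSemidef_vecMulVec_self_star (v i))

theorem dotProduct_mulVec_eq_trace_mul_vecMulVec {R : Type*} [CommSemiring R]
    (A : Matrix n n R) (v w : n → R) : v ⬝ᵥ A *ᵥ w = trace (A * vecMulVec w v) := by
  rw [mul_vecMulVec, trace_vecMulVec, dotProduct_comm]

theorem sum_dotProduct_mulVec_eq_trace_mul_sum_vecMulVec {R ι : Type*} [CommSemiring R]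
    (s : Finset ι) (A : Matrix n n R) (v : ι → n → R) :
    ∑ i ∈ s, v i ⬝ᵥ A *ᵥ v i = trace (A * ∑ i ∈ s, vecMulVec (v i) (v i)) := by
  simp only [Finset.mul_sum, trace_sum, dotProduct_mulVec_eq_trace_mul_vecMulVec]

theorem trace_inv_mul_sub_smul_one [DecidableEq n] {K : Type*} [Field K] {A : Matrix n n K}
    (hA : IsUnit A.det) (c : K) :
    trace (A⁻¹ * (A - c • 1)) = Fintype.card n - c * trace A⁻¹ := by
  rw [Matrix.mul_sub, nonsing_inv_mul A hA, Matrix.mul_smul, Matrix.mul_one, trace_sub,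
    trace_one, trace_smul, smul_eq_mul]

end Matrix

theorem sum_quadform_inv_le_dim
    (d K : ℕ) (lam : ℝ) (hlam : 0 < lam)
    (phi : Fin K → Fin d → ℝ)
    (Lam : Matrix (Fin d) (Fin d) ℝ)
    (hLam : Lam = lam • (1 : Matrix (Fin d) (Fin d) ℝ) +
      ∑ i : Fin K, vecMulVec (phi i) (phi i)) :
    ∑ i : Fin K, phi i ⬝ᵥ Lam⁻¹ *ᵥ phi i ≤ (d : ℝ) := by
  have hpos : Lam.PosDef := by
    simpa only [hLam, star_trivial] using posDef_smul_one_add_sum_vecMulVec Finset.univ hlam phi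
  have hsum : ∑ i : Fin K, vecMulVec (phi i) (phi i) = Lam - lam • 1 := by
    rw [hLam, add_sub_cancel_left]
  calc ∑ i : Fin K, phi i ⬝ᵥ Lam⁻¹ *ᵥ phi i = trace (Lam⁻¹ * (Lam - lam • 1)) := by
        rw [sum_dotProduct_mulVec_eq_trace_mul_sum_vecMulVec, hsum]
    _ = d - lam * trace Lam⁻¹ := by
        rw [trace_inv_mul_sub_smul_one hpos.det_pos.ne'.isUnit, Fintype.card_fin]
    _ ≤ d := sub_le_self _ (mul_nonneg hlam.le hpos.inv.posSemidef.trace_nonneg)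
end

section
/- Let A = Σ_{n=1}^N xⁿ(xⁿ)ᵀ where each xⁿ ∈ ℝ^d satisfies ‖xⁿ‖ ≤ R, and let λ ≥ R². Then log det(I + (1/λ)A) ≤ d·log(1 + N/d). -/
/-!
`M = 1 + λ⁻¹ A` is positive definite, and `tr M = d + λ⁻¹ ∑ ‖xⁿ‖² ≤ d + N` since `‖xⁿ‖² ≤ R² ≤ λ`.
By AM-GM on the eigenvalues, `det M ≤ (tr M / d) ^ d ≤ (1 + N / d) ^ d`; take logarithms.
-/

open Matrix Real Finset

theorem Real.prod_le_arith_mean_pow {ι : Type*} (s : Finset ι) (z : ι → ℝ)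
    (hz : ∀ i ∈ s, 0 ≤ z i) : ∏ i ∈ s, z i ≤ ((∑ i ∈ s, z i) / #s) ^ #s := by
  rcases s.eq_empty_or_nonempty with rfl | hs
  · simp
  have hcard : (#s : ℝ) ≠ 0 := by positivity
  have amgm := geom_mean_le_arith_mean_weighted s (fun _ => (#s : ℝ)⁻¹) z
    (fun _ _ => by positivity) (by simp [hcard]) hz
  calc ∏ i ∈ s, z i = (∏ i ∈ s, z i ^ (#s : ℝ)⁻¹) ^ #s := by
        rw [← prod_pow]
        exact prod_congr rfl fun i hi => (rpow_inv_natCast_pow (hz i hi) (by simpa using hcard)).symm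
    _ ≤ (∑ i ∈ s, (#s : ℝ)⁻¹ * z i) ^ #s :=
        pow_le_pow_left₀ (prod_nonneg fun i hi => rpow_nonneg (hz i hi) _) amgm _
    _ = ((∑ i ∈ s, z i) / #s) ^ #s := by rw [← mul_sum, inv_mul_eq_div]

theorem Matrix.PosSemidef.det_le_trace_div_card_pow {n : Type*} [Fintype n] [DecidableEq n]
    {M : Matrix n n ℝ} (hM : M.PosSemidef) :
    M.det ≤ (M.trace / Fintype.card n) ^ Fintype.card n := by
  rw [hM.isHermitian.det_eq_prod_eigenvalues, hM.isHermitian.trace_eq_sum_eigenvalues]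
  simpa using Real.prod_le_arith_mean_pow univ _ fun i _ => hM.eigenvalues_nonneg i

theorem Matrix.trace_sum_vecMulVec_self_le {ι n : Type*} [Fintype ι] [Fintype n]
    (x : ι → n → ℝ) {c : ℝ} (hx : ∀ i, x i ⬝ᵥ x i ≤ c) :
    (∑ i, vecMulVec (x i) (x i)).trace ≤ Fintype.card ι * c := by
  simp only [trace_sum, trace_vecMulVec]
  simpa using sum_le_sum fun i (_ : i ∈ univ) => hx i

theorem logdet_bound_general
    (d N : ℕ) (R lam : ℝ) (hlam : R ^ 2 ≤ lam)
    (x : Fin N → Fin d → ℝ)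
    (hx : ∀ n, Real.sqrt (x n ⬝ᵥ x n) ≤ R)
    (A : Matrix (Fin d) (Fin d) ℝ)
    (hA : A = ∑ n : Fin N, vecMulVec (x n) (x n)) :
    Real.log (Matrix.det ((1 : Matrix (Fin d) (Fin d) ℝ) + lam⁻¹ • A)) ≤
      (d : ℝ) * Real.log (1 + (N : ℝ) / d) := by
  have hlam0 : 0 ≤ lam := (sq_nonneg R).trans hlam
  have hA_psd : A.PosSemidef := hA ▸ posSemidef_sum _ fun n _ => by
    simpa using posSemidef_vecMulVec_self_star (x n)
  have hM : (1 + lam⁻¹ • A).PosDef := PosDef.one.add_posSemidef (hA_psd.smul (inv_nonneg.2 hlam0))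
  have htrA : A.trace ≤ N * R ^ 2 := by
    simpa [hA] using trace_sum_vecMulVec_self_le x fun n => (sqrt_le_iff.1 (hx n)).2
  have htrM : (1 + lam⁻¹ • A).trace / d ≤ 1 + N / d := by
    have hscaled : lam⁻¹ * A.trace ≤ N :=
      calc lam⁻¹ * A.trace ≤ lam⁻¹ * (N * R ^ 2) := by gcongr
        _ = N * (R ^ 2 / lam) := by ring
        _ ≤ N * 1 := by gcongr; exact div_le_one_of_le₀ hlam hlam0
        _ = N := mul_one _
    rw [trace_add, trace_smul, trace_one, Fintype.card_fin, smul_eq_mul, add_div]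
    gcongr
    exact div_self_le_one _
  have hdet : (1 + lam⁻¹ • A).det ≤ (1 + N / d) ^ d := by
    have h := hM.posSemidef.det_le_trace_div_card_pow
    rw [Fintype.card_fin] at h
    exact h.trans (pow_le_pow_left₀ (div_nonneg hM.posSemidef.trace_nonneg d.cast_nonneg) htrM d)
  calc Real.log (1 + lam⁻¹ • A).det ≤ Real.log ((1 + N / d) ^ d) := log_le_log hM.det_pos hdet
    _ = d * Real.log (1 + N / d) := Real.log_pow _ _

theorem logdet_bound
    (d N : ℕ) (hd : 1 ≤ d) (R lam : ℝ) (hlam : R ^ 2 ≤ lam)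
    (x : Fin N → Fin d → ℝ)
    (hx : ∀ n, Real.sqrt (x n ⬝ᵥ x n) ≤ R)
    (A : Matrix (Fin d) (Fin d) ℝ)
    (hA : A = ∑ n : Fin N, vecMulVec (x n) (x n)) :
    Real.log (Matrix.det ((1 : Matrix (Fin d) (Fin d) ℝ) + lam⁻¹ • A)) ≤
      (d : ℝ) * Real.log (1 + (N : ℝ) / d) :=
  logdet_bound_general d N R lam hlam x hx A hA
end

section
/- For any two policies π, π' and reward function r in a finite-horizon MDP with transitions P and horizon H, V^{r,π'} − V^{r,π} = Σ_{h=1}^H E_{s_h ∼ d^{π'}_h} [⟨Q^{r,π}_h(s_h, ·), π'_h(·|s_h) − π_h(·|s_h)⟩], where d^{π'}_h is the state distribution at step h under π'. -/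
/-!
Write `V' - V` at step `h` via the Bellman equations `V = ⟨π, Q⟩`:
`V'_h - V_h = ⟨π', Q'_h - Q_h⟩ + ⟨π' - π, Q_h⟩`, and `Q'_h - Q_h = P (V'_{h+1} - V_{h+1})`.
Averaging over the visitation distribution of `π'` at step `h`, the first term becomes the
average of `V'_{h+1} - V_{h+1}` under the visitation distribution at step `h + 1`, so the
averaged gaps telescope from `h = 0` (where the distribution is `μ`) to `h = H` (where both
values vanish).
-/

open BigOperators Finset

variable {S A : Type*}

noncomputable def Vfun [Fintype S] [Fintype A] (H : ℕ) (P : ℕ → S → A → S → ℝ)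
    (r : ℕ → S → A → ℝ) (pol : ℕ → S → A → ℝ) : ℕ → S → ℝ
  | h, s =>
    if _ : h < H then
      ∑ a, pol h s a * (r h s a + ∑ s', P h s a s' * Vfun H P r pol (h + 1) s')
    else 0
  termination_by h => H - h

noncomputable def Qfun [Fintype S] [Fintype A] (H : ℕ) (P : ℕ → S → A → S → ℝ)
    (r : ℕ → S → A → ℝ) (pol : ℕ → S → A → ℝ) (h : ℕ) (s : S) (a : A) : ℝ :=
  r h s a + ∑ s', P h s a s' * Vfun H P r pol (h + 1) s'

/-- State visitation distribution at step `h` under policy `pol`. -/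
noncomputable def occ [Fintype S] [Fintype A] (P : ℕ → S → A → S → ℝ) (mu : S → ℝ)
    (pol : ℕ → S → A → ℝ) : ℕ → S → ℝ
  | 0, s => mu s
  | h + 1, s => ∑ s', ∑ a', occ P mu pol h s' * pol h s' a' * P h s' a' s

section

variable [Fintype S] [Fintype A] {H : ℕ} {P : ℕ → S → A → S → ℝ} {r : ℕ → S → A → ℝ}
  {pol pol' : ℕ → S → A → ℝ}

theorem Vfun_eq_zero_of_le {h : ℕ} (hh : H ≤ h) (s : S) : Vfun H P r pol h s = 0 := by
  rw [Vfun, dif_neg (not_lt.mpr hh)]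

theorem Vfun_eq_sum_mul_Qfun {h : ℕ} (hh : h < H) (s : S) :
    Vfun H P r pol h s = ∑ a, pol h s a * Qfun H P r pol h s a := by
  rw [Vfun, dif_pos hh]
  rfl

theorem Qfun_sub_Qfun (h : ℕ) (s : S) (a : A) :
    Qfun H P r pol' h s a - Qfun H P r pol h s a =
      ∑ s', P h s a s' * (Vfun H P r pol' (h + 1) s' - Vfun H P r pol (h + 1) s') := by
  simp only [Qfun, mul_sub, sum_sub_distrib, add_sub_add_left_eq_sub]

theorem Vfun_sub_Vfun {h : ℕ} (hh : h < H) (s : S) :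
    Vfun H P r pol' h s - Vfun H P r pol h s =
      ∑ a, pol' h s a *
          ∑ s', P h s a s' * (Vfun H P r pol' (h + 1) s' - Vfun H P r pol (h + 1) s') +
        ∑ a, Qfun H P r pol h s a * (pol' h s a - pol h s a) := by
  simp only [Vfun_eq_sum_mul_Qfun hh, ← Qfun_sub_Qfun, ← sum_add_distrib, ← sum_sub_distrib]
  exact sum_congr rfl fun a _ => by ring

theorem sum_occ_succ_mul (mu : S → ℝ) (h : ℕ) (W : S → ℝ) :
    ∑ s', occ P mu pol (h + 1) s' * W s' =
      ∑ s, occ P mu pol h s * ∑ a, pol h s a * ∑ s', P h s a s' * W s' := by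
  simp only [occ, sum_mul, mul_sum, mul_assoc]
  rw [sum_comm]
  exact sum_congr rfl fun s _ => sum_comm

theorem sum_occ_mul_Vfun_sub_Vfun (mu : S → ℝ) {h : ℕ} (hh : h < H) :
    ∑ s, occ P mu pol' h s * (Vfun H P r pol' h s - Vfun H P r pol h s) =
      ∑ s, occ P mu pol' h s * ∑ a, Qfun H P r pol h s a * (pol' h s a - pol h s a) +
        ∑ s, occ P mu pol' (h + 1) s *
          (Vfun H P r pol' (h + 1) s - Vfun H P r pol (h + 1) s) := by
  simp only [sum_occ_succ_mul, Vfun_sub_Vfun hh, mul_add, sum_add_distrib]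
  ring

end

theorem performance_difference_general [Fintype S] [Fintype A]
    (H : ℕ) (P : ℕ → S → A → S → ℝ) (mu : S → ℝ)
    (r : ℕ → S → A → ℝ) (pol pol' : ℕ → S → A → ℝ) :
    (∑ s, mu s * Vfun H P r pol' 0 s) - (∑ s, mu s * Vfun H P r pol 0 s) =
      ∑ h ∈ Finset.range H, ∑ s, occ P mu pol' h s *
        ∑ a, Qfun H P r pol h s a * (pol' h s a - pol h s a) := by
  set gap : ℕ → ℝ := fun h =>
    ∑ s, occ P mu pol' h s * (Vfun H P r pol' h s - Vfun H P r pol h s)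
  calc (∑ s, mu s * Vfun H P r pol' 0 s) - (∑ s, mu s * Vfun H P r pol 0 s)
      = gap 0 - gap H := by
        simp only [gap, occ, Vfun_eq_zero_of_le le_rfl, sub_self, mul_zero, sum_const_zero,
          sub_zero, mul_sub, sum_sub_distrib]
    _ = ∑ h ∈ range H, (gap h - gap (h + 1)) := (sum_range_sub' gap H).symm
    _ = _ := sum_congr rfl fun h hh => by
        simp only [gap, sum_occ_mul_Vfun_sub_Vfun mu (mem_range.mp hh), add_sub_cancel_right]

/-- Performance difference lemma. -/
theorem performance_difference [Fintype S] [Fintype A]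
    (H : ℕ) (P : ℕ → S → A → S → ℝ) (mu : S → ℝ)
    (r : ℕ → S → A → ℝ) (pol pol' : ℕ → S → A → ℝ)
    (hmu_nonneg : ∀ s, 0 ≤ mu s) (hmu_sum : ∑ s, mu s = 1)
    (hP_nonneg : ∀ h s a s', 0 ≤ P h s a s')
    (hP_sum : ∀ h s a, ∑ s', P h s a s' = 1)
    (hpol : ∀ h s, (∀ a, 0 ≤ pol h s a) ∧ ∑ a, pol h s a = 1)
    (hpol' : ∀ h s, (∀ a, 0 ≤ pol' h s a) ∧ ∑ a, pol' h s a = 1) :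
    (∑ s, mu s * Vfun H P r pol' 0 s) - (∑ s, mu s * Vfun H P r pol 0 s) =
      ∑ h ∈ Finset.range H, ∑ s, occ P mu pol' h s *
        ∑ a, Qfun H P r pol h s a * (pol' h s a - pol h s a) :=
  performance_difference_general H P mu r pol pol'
end

section
/- Let A be a finite set, and let x, x' : A → ℝ satisfy |x(a) − x'(a)| ≤ c for all a ∈ A. Define softmax distributions p(a) = exp(x(a))/Σ_{a'} exp(x(a')) and p'(a) = exp(x'(a))/Σ_{a'} exp(x'(a')). Then ‖p − p'‖₁ ≤ exp(2c) − 1. -/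
/-!
Each softmax weight changes by a factor of at most `exp (2 * c)` when the logits move by at most
`c`: the numerator by at most `exp c` and the normalising sum by at most `exp c`. Two numbers
within a factor `K ≥ 1` of each other differ by at most `(K - 1)` times either one, so summing
against the weights of `p`, which add up to `1`, gives the bound.
-/

open BigOperators Finset Real

theorem abs_sub_le_sub_one_mul_of_le_mul {p q K : ℝ} (hK : 1 ≤ K) (hpq : p ≤ K * q)
    (hqp : q ≤ K * p) : |p - q| ≤ (K - 1) * p := by
  rcases le_total q p with hle | hle
  · rw [abs_of_nonneg (sub_nonneg.2 hle)]
    nlinarith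
  · rw [abs_of_nonpos (sub_nonpos.2 hle)]
    linarith

theorem Real.exp_le_exp_mul_exp {x y c : ℝ} (h : x ≤ y + c) : exp x ≤ exp c * exp y := by
  rw [← exp_add]
  exact exp_le_exp.2 (by linarith)

section Softmax

variable {A : Type*} [Fintype A]

noncomputable def softmax (x : A → ℝ) (a : A) : ℝ :=
  exp (x a) / ∑ a', exp (x a')

theorem sum_exp_le_exp_mul_sum_exp {x y : A → ℝ} {c : ℝ} (h : ∀ a, x a ≤ y a + c) :
    ∑ a, exp (x a) ≤ exp c * ∑ a, exp (y a) := by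
  rw [mul_sum]
  exact sum_le_sum fun a _ => exp_le_exp_mul_exp (h a)

theorem sum_softmax [Nonempty A] (x : A → ℝ) : ∑ a, softmax x a = 1 := by
  simp only [softmax]
  rw [← sum_div, div_self (sum_pos (fun a _ => exp_pos _) univ_nonempty).ne']

theorem softmax_le_exp_two_mul_mul_softmax [Nonempty A] {x x' : A → ℝ} {c : ℝ}
    (h : ∀ a, |x a - x' a| ≤ c) (a : A) :
    softmax x a ≤ exp (2 * c) * softmax x' a := by
  have hS : 0 < ∑ b, exp (x b) := sum_pos (fun b _ => exp_pos _) univ_nonempty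
  have hS' : 0 < ∑ b, exp (x' b) := sum_pos (fun b _ => exp_pos _) univ_nonempty
  have hnum : exp (x a) ≤ exp c * exp (x' a) :=
    exp_le_exp_mul_exp (by linarith [(abs_le.1 (h a)).2])
  have hden : (∑ b, exp (x' b)) / exp c ≤ ∑ b, exp (x b) :=
    div_le_of_le_mul₀ (exp_pos c).le hS.le <| by
      rw [mul_comm]
      exact sum_exp_le_exp_mul_sum_exp fun b => by linarith [(abs_le.1 (h b)).1]
  calc softmax x a
      ≤ exp c * exp (x' a) / ∑ b, exp (x b) := div_le_div_of_nonneg_right hnum hS.le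
    _ ≤ exp c * exp (x' a) / ((∑ b, exp (x' b)) / exp c) :=
        div_le_div_of_nonneg_left (by positivity) (by positivity) hden
    _ = exp (2 * c) * softmax x' a := by
        rw [softmax, two_mul, exp_add]
        field_simp

end Softmax

/-- Total variation distance between two softmax distributions with pointwise-close logits. -/
theorem softmax_tv_bound
    {A : Type*} [Fintype A] [Nonempty A]
    (c : ℝ) (hc : 0 ≤ c) (x x' : A → ℝ)
    (hclose : ∀ a, |x a - x' a| ≤ c) :
    ∑ a, |Real.exp (x a) / (∑ a', Real.exp (x a')) -
          Real.exp (x' a) / (∑ a', Real.exp (x' a'))| ≤ Real.exp (2 * c) - 1 := by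
  have hclose' : ∀ a, |x' a - x a| ≤ c := fun a => abs_sub_comm (x a) (x' a) ▸ hclose a
  have hK : 1 ≤ exp (2 * c) := one_le_exp (by linarith)
  calc ∑ a, |softmax x a - softmax x' a|
      ≤ ∑ a, (exp (2 * c) - 1) * softmax x a :=
        sum_le_sum fun a _ => abs_sub_le_sub_one_mul_of_le_mul hK
          (softmax_le_exp_two_mul_mul_softmax hclose a)
          (softmax_le_exp_two_mul_mul_softmax hclose' a)
    _ = exp (2 * c) - 1 := by rw [← mul_sum, sum_softmax, mul_one]
end
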